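/- Let ℂ^d = ℂ^{d_S} ⊗ ℂ^{d_B} and let H = H_0 + H_S ⊗ 1 + 1 ⊗ H_B + H_{SB} be a Hermitian operator, where H_0 is a real multiple of the identity and H_S, H_B, H_{SB} are traceless Hermitian operators. Let H_S have eigenvalues E^S_k and orthonormal eigenvectors |E^S_k⟩. Then every density matrix ρ on ℂ^d with reduced state ρ^S = Tr_B ρ satisfies ‖H_{SB}‖∞ + ½ ‖i[ρ^S, H_S] + i Tr_B[ρ, H_{SB}]‖₁ ≥ 2⁻¹·2·Σ_{(k,l)∈P} |E^S_k − E^S_l| · |ρ^S_{kl}| for every collection P of pairwise-disjoint index pairs, and in particular ‖H_{SB}‖∞ + ½ ‖i[ρ^S, H_S] + i Tr_B[ρ, H_{SB}]‖₁ ≥ max_{k,l} |E^S_k − E^S_l| · |ρ^S_{kl}|, where ρ^S_{kl} = ⟨E^S_k| ρ^S |E^S_l⟩. -/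

import Mathlib

open MeasureTheory Matrix Filter
open scoped BigOperators Kronecker InnerProductSpace ComplexOrder

noncomputable section

namespace PQSM

variable {n : Type*} [Fintype n] [DecidableEq n]

instance : MeasurableSpace (EuclideanSpace ℂ n) := MeasurableSpace.comap WithLp.ofLp MeasurableSpace.pi

/-- The outer product (pure state density matrix) `|u⟩⟨u|` of a vector with itself. -/
def outer (u : EuclideanSpace ℂ n) : Matrix n n ℂ :=
  fun i j => u i * (starRingEnd ℂ) (u j)

/-- Operator norm of a matrix acting on Euclidean space. -/
def opNorm (A : Matrix n n ℂ) : ℝ := ‖Matrix.toEuclideanCLM (𝕜 := ℂ) A‖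

/-- Trace norm `Tr √(AᴴA)`. -/
def traceNorm (A : Matrix n n ℂ) : ℝ :=
  ((((Matrix.posSemidef_conjTranspose_mul_self A).1.eigenvectorUnitary : Matrix n n ℂ) *
    Matrix.diagonal ((fun x : ℝ => (x : ℂ)) ∘ Real.sqrt ∘ (Matrix.posSemidef_conjTranspose_mul_self A).1.eigenvalues) *
    (star (Matrix.posSemidef_conjTranspose_mul_self A).1.eigenvectorUnitary : Matrix n n ℂ)).trace).re

/-- Trace distance `½‖ρ − σ‖₁`. -/
def traceDist (ρ σ : Matrix n n ℂ) : ℝ := traceNorm (ρ - σ) / 2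

/-- Real expectation value `Re Tr[B ρ]`. -/
def expVal (B ρ : Matrix n n ℂ) : ℝ := ((B * ρ).trace).re

/-- Purity `Tr[ρ²]`. -/
def purity (ρ : Matrix n n ℂ) : ℝ := ((ρ * ρ).trace).re

/-- Effective dimension `1/Tr[ρ²]`. -/
def dEff (ρ : Matrix n n ℂ) : ℝ := 1 / purity ρ

/-- An orthogonal projector. -/
def IsProjector (P : Matrix n n ℂ) : Prop := P.IsHermitian ∧ P * P = P

/-- A density matrix: positive semidefinite with unit trace. -/
def IsDensityMatrix (ρ : Matrix n n ℂ) : Prop := ρ.PosSemidef ∧ ρ.trace = 1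

/-- The microcanonical state `Π_R/d_R` of the subspace with projector `P` of dimension `dR`. -/
def mcState (P : Matrix n n ℂ) (dR : ℕ) : Matrix n n ℂ := ((dR : ℂ))⁻¹ • P

/-- `μ` is the uniform (rotation-invariant, Haar) probability measure on the unit sphere of the
subspace of `ℂ^n` whose orthogonal projector is `P`: `μ` is a probability measure, it is
concentrated on the unit vectors fixed by `P`, and it is invariant under every unitary of the
full space that preserves the subspace (equivalently, commutes with `P`). -/
def IsUniformOnSphere (P : Matrix n n ℂ) (μ : Measure (EuclideanSpace ℂ n)) : Prop :=
  IsProbabilityMeasure μ ∧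
  (∀ᵐ u ∂μ, ‖u‖ = 1 ∧ Matrix.toEuclideanCLM (𝕜 := ℂ) P u = u) ∧
  ∀ U ∈ Matrix.unitaryGroup n ℂ,
    U * P = P * U →
    Measure.map (fun u => Matrix.toEuclideanCLM (𝕜 := ℂ) U u) μ = μ

/-- Non-degenerate energy gaps. -/
def HasNonDegenerateGaps {H : Matrix n n ℂ} (hH : H.IsHermitian) : Prop :=
  ∀ k l m p : n, hH.eigenvalues k - hH.eigenvalues l = hH.eigenvalues m - hH.eigenvalues p →
    (k = l ∧ m = p) ∨ (k = m ∧ l = p)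

/-- Dephasing `$[ρ] = Σ_k |E_k⟩⟨E_k| ρ |E_k⟩⟨E_k|` with respect to the eigenbasis of `H`. -/
def dephase {H : Matrix n n ℂ} (hH : H.IsHermitian) (ρ : Matrix n n ℂ) : Matrix n n ℂ :=
  ∑ k, outer (hH.eigenvectorBasis k) * ρ * outer (hH.eigenvectorBasis k)

/-- Time evolution `ρ_t = e^{−iHt} ρ e^{iHt}`. -/
def evol (H : Matrix n n ℂ) (t : ℝ) (ρ : Matrix n n ℂ) : Matrix n n ℂ :=
  NormedSpace.exp ((-(Complex.I * t)) • H) * ρ * NormedSpace.exp ((Complex.I * t) • H)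

variable {nS nB : Type*} [Fintype nS] [Fintype nB]

/-- Partial trace over the second (bath) tensor factor. -/
def ptraceB (M : Matrix (nS × nB) (nS × nB) ℂ) : Matrix nS nS ℂ :=
  fun i j => ∑ b, M (i, b) (j, b)

/-- Partial trace over the first (system) tensor factor. -/
def ptraceS (M : Matrix (nS × nB) (nS × nB) ℂ) : Matrix nB nB ℂ :=
  fun i j => ∑ a, M (a, i) (a, j)

/-- Tensor product of vectors. -/
def tensorVec (u : EuclideanSpace ℂ nS) (v : EuclideanSpace ℂ nB) :
    EuclideanSpace ℂ (nS × nB) := WithLp.toLp 2 (fun p => u p.1 * v p.2)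

/-- Von Neumann entropy `−Σ λ_i log λ_i` (with `0 log 0 = 0`). -/
def vnEntropy (ρ : Matrix n n ℂ) : ℝ :=
  if h : ρ.IsHermitian then -∑ i, h.eigenvalues i * Real.log (h.eigenvalues i) else 0

/-- Quantum mutual information `I_{SB}(ρ) = S(ρ^S) + S(ρ^B) − S(ρ)`. -/
def mutualInfo [DecidableEq nS] [DecidableEq nB] (ρ : Matrix (nS × nB) (nS × nB) ℂ) : ℝ :=
  vnEntropy (ptraceB ρ) + vnEntropy (ptraceS ρ) - vnEntropy ρ

end PQSM

/-! Write `A₁ = i[ρ^S, H_S]` and `A₂ = i Tr_B[ρ, H_SB]`. In the eigenbasis of `H_S` one has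
`⟨k|A₁|l⟩ = i (E_l - E_k) ρ^S_kl`, so `|E_k - E_l| |ρ^S_kl| ≤ |⟨k|A₁ + A₂|l⟩| + |⟨k|A₂|l⟩|`.
Counting every pair of `P` in both orientations turns the sums over `P` into sums
`∑ᵢ |⟨uᵢ|X|wᵢ⟩|` over two orthonormal families, because the pairs are disjoint and `A₁ + A₂`,
`A₂` are Hermitian. Expanding `X` spectrally, Bessel's inequality and Cauchy–Schwarz bound such a
sum by `‖X‖₁`; for `X = A₂` the partial trace becomes a sum over product vectors `|uᵢ⟩|b⟩`, and
expanding `ρ` spectrally bounds it by `2 Tr ρ ‖H_SB‖∞`. -/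

section Orthonormal

variable {𝕜 E ι α : Type*} [RCLike 𝕜] [NormedAddCommGroup E] [InnerProductSpace 𝕜 E]
  [Fintype ι] [Fintype α] {u w : ι → E}

theorem Orthonormal.sum_norm_inner_mul_norm_inner_le (hu : Orthonormal 𝕜 u)
    (hw : Orthonormal 𝕜 w) (p q : E) :
    ∑ i, ‖⟪u i, p⟫_𝕜‖ * ‖⟪q, w i⟫_𝕜‖ ≤ ‖p‖ * ‖q‖ := by
  have hp : ∑ i, ‖⟪u i, p⟫_𝕜‖ ^ 2 ≤ ‖p‖ ^ 2 := hu.sum_inner_products_le p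
  have hq : ∑ i, ‖⟪q, w i⟫_𝕜‖ ^ 2 ≤ ‖q‖ ^ 2 := by
    simpa only [norm_inner_symm q] using hw.sum_inner_products_le q
  calc ∑ i, ‖⟪u i, p⟫_𝕜‖ * ‖⟪q, w i⟫_𝕜‖
      ≤ √(∑ i, ‖⟪u i, p⟫_𝕜‖ ^ 2) * √(∑ i, ‖⟪q, w i⟫_𝕜‖ ^ 2) :=
        Real.sum_mul_le_sqrt_mul_sqrt _ _ _
    _ ≤ √(‖p‖ ^ 2) * √(‖q‖ ^ 2) := by gcongr
    _ = ‖p‖ * ‖q‖ := by rw [Real.sqrt_sq (norm_nonneg p), Real.sqrt_sq (norm_nonneg q)]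

theorem Orthonormal.sum_norm_sum_mul_inner_mul_inner_le (hu : Orthonormal 𝕜 u)
    (hw : Orthonormal 𝕜 w) (c : α → 𝕜) (p q : α → E) :
    ∑ i, ‖∑ a, c a * ⟪u i, p a⟫_𝕜 * ⟪q a, w i⟫_𝕜‖ ≤ ∑ a, ‖c a‖ * (‖p a‖ * ‖q a‖) :=
  calc ∑ i, ‖∑ a, c a * ⟪u i, p a⟫_𝕜 * ⟪q a, w i⟫_𝕜‖
      ≤ ∑ i, ∑ a, ‖c a‖ * (‖⟪u i, p a⟫_𝕜‖ * ‖⟪q a, w i⟫_𝕜‖) := by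
        gcongr with i
        refine (norm_sum_le _ _).trans_eq ?_
        simp only [norm_mul, mul_assoc]
    _ = ∑ a, ‖c a‖ * ∑ i, ‖⟪u i, p a⟫_𝕜‖ * ‖⟪q a, w i⟫_𝕜‖ := by
        rw [Finset.sum_comm]
        simp only [Finset.mul_sum]
    _ ≤ ∑ a, ‖c a‖ * (‖p a‖ * ‖q a‖) := by
        gcongr with a
        exact hu.sum_norm_inner_mul_norm_inner_le hw (p a) (q a)

end Orthonormal

namespace Matrix

theorem isHermitian_I_smul_commutator {n : Type*} [Fintype n] {A B : Matrix n n ℂ}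
    (hA : A.IsHermitian) (hB : B.IsHermitian) : (Complex.I • (A * B - B * A)).IsHermitian := by
  rw [IsHermitian, conjTranspose_smul, conjTranspose_sub, conjTranspose_mul, conjTranspose_mul,
    hA.eq, hB.eq, Complex.star_def, Complex.conj_I, neg_smul, ← smul_neg, neg_sub]

variable {𝕜 n : Type*} [RCLike 𝕜] [Fintype n] [DecidableEq n]

theorem norm_inner_toEuclideanCLM_conjTranspose (A : Matrix n n 𝕜) (x y : EuclideanSpace 𝕜 n) :
    ‖⟪x, toEuclideanCLM (𝕜 := 𝕜) Aᴴ y⟫_𝕜‖ = ‖⟪y, toEuclideanCLM (𝕜 := 𝕜) A x⟫_𝕜‖ := by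
  rw [← star_eq_conjTranspose, map_star, ContinuousLinearMap.star_eq_adjoint,
    ContinuousLinearMap.adjoint_inner_right, norm_inner_symm]

theorem IsHermitian.norm_inner_toEuclideanCLM_comm {A : Matrix n n 𝕜} (hA : A.IsHermitian)
    (x y : EuclideanSpace 𝕜 n) :
    ‖⟪x, toEuclideanCLM (𝕜 := 𝕜) A y⟫_𝕜‖ = ‖⟪y, toEuclideanCLM (𝕜 := 𝕜) A x⟫_𝕜‖ := by
  conv_lhs => rw [← hA.eq]
  exact norm_inner_toEuclideanCLM_conjTranspose A x y

theorem IsHermitian.inner_toEuclideanCLM_eq_sum {A : Matrix n n 𝕜} (hA : A.IsHermitian)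
    (x y : EuclideanSpace 𝕜 n) :
    ⟪x, toEuclideanCLM (𝕜 := 𝕜) A y⟫_𝕜 = ∑ a, (hA.eigenvalues a : 𝕜)
      * ⟪x, hA.eigenvectorBasis a⟫_𝕜 * ⟪hA.eigenvectorBasis a, y⟫_𝕜 := by
  have heig : ∀ a, toEuclideanCLM (𝕜 := 𝕜) A (hA.eigenvectorBasis a)
      = (hA.eigenvalues a : 𝕜) • hA.eigenvectorBasis a := fun a =>
    PiLp.ext fun i => by simpa using congrFun (hA.mulVec_eigenvectorBasis a) i
  conv_lhs => rw [← hA.eigenvectorBasis.sum_repr y]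
  simp only [map_sum, map_smul, heig, inner_sum, inner_smul_right, smul_smul,
    hA.eigenvectorBasis.repr_apply_apply]
  exact Finset.sum_congr rfl fun a _ => by ring

theorem IsHermitian.inner_toEuclideanCLM_commutator {H : Matrix n n 𝕜} (hH : H.IsHermitian)
    (R : Matrix n n 𝕜) {x y : EuclideanSpace 𝕜 n} {a b : ℝ}
    (hx : toEuclideanCLM (𝕜 := 𝕜) H x = (a : 𝕜) • x)
    (hy : toEuclideanCLM (𝕜 := 𝕜) H y = (b : 𝕜) • y) :
    ⟪x, toEuclideanCLM (𝕜 := 𝕜) (R * H - H * R) y⟫_𝕜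
      = ((b : 𝕜) - a) * ⟪x, toEuclideanCLM (𝕜 := 𝕜) R y⟫_𝕜 := by
  have hHx : ∀ z, ⟪x, toEuclideanCLM (𝕜 := 𝕜) H z⟫_𝕜 = (a : 𝕜) * ⟪x, z⟫_𝕜 := fun z =>
    calc ⟪x, toEuclideanCLM (𝕜 := 𝕜) H z⟫_𝕜 = ⟪toEuclideanCLM (𝕜 := 𝕜) H x, z⟫_𝕜 :=
          ((isSymmetric_toEuclideanLin_iff.mpr hH) x z).symm
      _ = (a : 𝕜) * ⟪x, z⟫_𝕜 := by rw [hx, inner_smul_left, RCLike.conj_ofReal]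
  simp only [map_sub, map_mul, _root_.sub_apply, mul_apply_eq_comp, inner_sub_right, hy,
    map_smul, inner_smul_right, hHx]
  ring

end Matrix

namespace PQSM

section Bounds

variable {n ι : Type*} [Fintype n] [DecidableEq n] [Fintype ι] {u w : ι → EuclideanSpace ℂ n}

theorem traceNorm_eq_sum_abs_eigenvalues {A : Matrix n n ℂ} (hA : A.IsHermitian) :
    traceNorm A = ∑ a, |hA.eigenvalues a| := by
  have hAA := (posSemidef_conjTranspose_mul_self A).1
  have hsqrt : cfc Real.sqrt (Aᴴ * A) = cfc (fun x : ℝ => |x|) A := by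
    rw [hA.eq, ← pow_two, ← cfc_pow_id (R := ℝ) A 2, ← cfc_comp Real.sqrt (· ^ 2 : ℝ → ℝ) A]
    simp only [Function.comp_def, Real.sqrt_sq_eq_abs]
  have h : traceNorm A = (cfc Real.sqrt (Aᴴ * A)).trace.re := by
    rw [hAA.cfc_eq, IsHermitian.cfc, Unitary.conjStarAlgAut_apply]; rfl
  rw [h, hsqrt, hA.cfc_eq, IsHermitian.cfc, Unitary.conjStarAlgAut_apply, trace_mul_cycle,
    (mem_unitaryGroup_iff').mp hA.eigenvectorUnitary.2, Matrix.one_mul, trace_diagonal,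
    Complex.re_sum]
  simp

theorem opNorm_conjTranspose (X : Matrix n n ℂ) : opNorm Xᴴ = opNorm X := by
  rw [opNorm, opNorm, ← star_eq_conjTranspose, map_star, ContinuousLinearMap.star_eq_adjoint,
    LinearIsometryEquiv.norm_map]

theorem sum_norm_inner_le_traceNorm {A : Matrix n n ℂ} (hA : A.IsHermitian)
    (hu : Orthonormal ℂ u) (hw : Orthonormal ℂ w) :
    ∑ i, ‖⟪u i, toEuclideanCLM (𝕜 := ℂ) A (w i)⟫_ℂ‖ ≤ traceNorm A := by
  have h := hu.sum_norm_sum_mul_inner_mul_inner_le hw (fun a => (hA.eigenvalues a : ℂ))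
    (fun a => hA.eigenvectorBasis a) (fun a => hA.eigenvectorBasis a)
  simp only [Complex.norm_real, Real.norm_eq_abs, hA.eigenvectorBasis.orthonormal.1, mul_one]
    at h
  rw [traceNorm_eq_sum_abs_eigenvalues hA]
  simp only [hA.inner_toEuclideanCLM_eq_sum]
  exact h

theorem sum_norm_inner_mul_le {ρ : Matrix n n ℂ} (hρ : ρ.PosSemidef) (X : Matrix n n ℂ)
    (hu : Orthonormal ℂ u) (hw : Orthonormal ℂ w) :
    ∑ i, ‖⟪u i, toEuclideanCLM (𝕜 := ℂ) (ρ * X) (w i)⟫_ℂ‖ ≤ ρ.trace.re * opNorm X := by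
  set T := toEuclideanCLM (𝕜 := ℂ) X
  set e := hρ.1.eigenvectorBasis
  have hexpand : ∀ i, ⟪u i, toEuclideanCLM (𝕜 := ℂ) (ρ * X) (w i)⟫_ℂ
      = ∑ a, (hρ.1.eigenvalues a : ℂ) * ⟪u i, e a⟫_ℂ * ⟪T.adjoint (e a), w i⟫_ℂ := fun i => by
    rw [map_mul, mul_apply_eq_comp, hρ.1.inner_toEuclideanCLM_eq_sum]
    simp only [ContinuousLinearMap.adjoint_inner_left]
    rfl
  have hadj : ∀ a, ‖T.adjoint (e a)‖ ≤ opNorm X := fun a =>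
    calc ‖T.adjoint (e a)‖ ≤ ‖T.adjoint‖ * ‖e a‖ := T.adjoint.le_opNorm _
      _ = opNorm X := by rw [LinearIsometryEquiv.norm_map, e.orthonormal.1, mul_one]; rfl
  calc ∑ i, ‖⟪u i, toEuclideanCLM (𝕜 := ℂ) (ρ * X) (w i)⟫_ℂ‖
      ≤ ∑ a, ‖(hρ.1.eigenvalues a : ℂ)‖ * (‖e a‖ * ‖T.adjoint (e a)‖) := by
        simp only [hexpand]
        exact hu.sum_norm_sum_mul_inner_mul_inner_le hw _ _ _
    _ ≤ ∑ a, hρ.1.eigenvalues a * opNorm X := by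
        refine Finset.sum_le_sum fun a _ => ?_
        rw [Complex.norm_real, Real.norm_of_nonneg (hρ.eigenvalues_nonneg a), e.orthonormal.1,
          one_mul]
        exact mul_le_mul_of_nonneg_left (hadj a) (hρ.eigenvalues_nonneg a)
    _ = ρ.trace.re * opNorm X := by
        rw [← Finset.sum_mul, hρ.1.trace_eq_sum_eigenvalues, Complex.re_sum]
        simp

theorem sum_norm_inner_commutator_le {ρ : Matrix n n ℂ} (hρ : ρ.PosSemidef) (X : Matrix n n ℂ)
    (hu : Orthonormal ℂ u) (hw : Orthonormal ℂ w) :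
    ∑ i, ‖⟪u i, toEuclideanCLM (𝕜 := ℂ) (ρ * X - X * ρ) (w i)⟫_ℂ‖
      ≤ 2 * ρ.trace.re * opNorm X := by
  have hXρ : ∀ i, ‖⟪u i, toEuclideanCLM (𝕜 := ℂ) (X * ρ) (w i)⟫_ℂ‖
      = ‖⟪w i, toEuclideanCLM (𝕜 := ℂ) (ρ * Xᴴ) (u i)⟫_ℂ‖ := fun i => by
    rw [← norm_inner_toEuclideanCLM_conjTranspose, conjTranspose_mul, hρ.1.eq]
  calc ∑ i, ‖⟪u i, toEuclideanCLM (𝕜 := ℂ) (ρ * X - X * ρ) (w i)⟫_ℂ‖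
      ≤ ∑ i, ‖⟪u i, toEuclideanCLM (𝕜 := ℂ) (ρ * X) (w i)⟫_ℂ‖
          + ∑ i, ‖⟪w i, toEuclideanCLM (𝕜 := ℂ) (ρ * Xᴴ) (u i)⟫_ℂ‖ := by
        rw [← Finset.sum_add_distrib]
        gcongr with i
        rw [← hXρ, map_sub, _root_.sub_apply, inner_sub_right]
        exact norm_sub_le _ _
    _ ≤ ρ.trace.re * opNorm X + ρ.trace.re * opNorm Xᴴ :=
        add_le_add (sum_norm_inner_mul_le hρ X hu hw) (sum_norm_inner_mul_le hρ Xᴴ hw hu)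
    _ = 2 * ρ.trace.re * opNorm X := by rw [opNorm_conjTranspose]; ring

theorem abs_sub_mul_norm_inner_le {H : Matrix n n ℂ} (hH : H.IsHermitian) (R B : Matrix n n ℂ)
    {x y : EuclideanSpace ℂ n} {a b : ℝ} (hx : toEuclideanCLM (𝕜 := ℂ) H x = (a : ℂ) • x)
    (hy : toEuclideanCLM (𝕜 := ℂ) H y = (b : ℂ) • y) :
    |a - b| * ‖⟪x, toEuclideanCLM (𝕜 := ℂ) R y⟫_ℂ‖
      ≤ ‖⟪x, toEuclideanCLM (𝕜 := ℂ) (Complex.I • (R * H - H * R) + B) y⟫_ℂ‖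
        + ‖⟪x, toEuclideanCLM (𝕜 := ℂ) B y⟫_ℂ‖ := by
  refine le_of_eq_of_le ?_ (norm_sub_le _ _)
  rw [← inner_sub_right, ← _root_.sub_apply, ← map_sub, add_sub_cancel_right, map_smul,
    _root_.smul_apply, inner_smul_right, hH.inner_toEuclideanCLM_commutator R hx hy, norm_mul,
    norm_mul, Complex.norm_I, one_mul, ← RCLike.ofReal_sub, RCLike.norm_ofReal, abs_sub_comm]

end Bounds

section PartialTrace

variable {nS nB ι κ : Type*} [Fintype nB]

theorem ptraceB_smul (c : ℂ) (M : Matrix (nS × nB) (nS × nB) ℂ) :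
    ptraceB (c • M) = c • ptraceB M := by
  ext i j
  simp only [ptraceB, Matrix.smul_apply, smul_eq_mul, Finset.mul_sum]

theorem isHermitian_ptraceB {M : Matrix (nS × nB) (nS × nB) ℂ} (hM : M.IsHermitian) :
    (ptraceB M).IsHermitian := by
  ext i j
  simp only [conjTranspose_apply, ptraceB, star_sum]
  exact Finset.sum_congr rfl fun b _ => hM.apply _ _

variable [Fintype nS]

theorem inner_tensorVec (u u' : EuclideanSpace ℂ nS) (v v' : EuclideanSpace ℂ nB) :
    ⟪tensorVec u v, tensorVec u' v'⟫_ℂ = ⟪u, u'⟫_ℂ * ⟪v, v'⟫_ℂ := by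
  simp only [PiLp.inner_apply, RCLike.inner_apply, Finset.sum_mul_sum, ← Finset.sum_product',
    tensorVec, map_mul]
  exact Finset.sum_congr rfl fun _ _ => by ring

theorem orthonormal_tensorVec {x : ι → EuclideanSpace ℂ nS} {y : κ → EuclideanSpace ℂ nB}
    (hx : Orthonormal ℂ x) (hy : Orthonormal ℂ y) :
    Orthonormal ℂ fun p : ι × κ => tensorVec (x p.1) (y p.2) := by
  classical
  rw [orthonormal_iff_ite] at hx hy ⊢
  intro p q
  rw [inner_tensorVec, hx, hy, ite_zero_mul_ite_zero, one_mul]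
  exact if_congr Prod.ext_iff.symm rfl rfl

variable [DecidableEq nS] [DecidableEq nB]

theorem inner_ptraceB (M : Matrix (nS × nB) (nS × nB) ℂ) (u w : EuclideanSpace ℂ nS) :
    ⟪u, toEuclideanCLM (𝕜 := ℂ) (ptraceB M) w⟫_ℂ
      = ∑ b, ⟪tensorVec u (EuclideanSpace.single b 1),
          toEuclideanCLM (𝕜 := ℂ) M (tensorVec w (EuclideanSpace.single b 1))⟫_ℂ := by
  simp only [PiLp.inner_apply, RCLike.inner_apply, ofLp_toEuclideanCLM, toEuclideanCLM_toLp,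
    mulVec, dotProduct, ptraceB, tensorVec, PiLp.single_apply, Fintype.sum_prod_type,
    Finset.sum_mul, apply_ite, map_zero, mul_one, mul_zero, Finset.sum_ite_eq', Finset.mem_univ,
    if_true]
  conv_rhs => rw [Finset.sum_comm]
  exact Finset.sum_congr rfl fun _ _ => Finset.sum_comm

theorem sum_norm_inner_ptraceB_le (M : Matrix (nS × nB) (nS × nB) ℂ) [Fintype ι]
    (u w : ι → EuclideanSpace ℂ nS) :
    ∑ i, ‖⟪u i, toEuclideanCLM (𝕜 := ℂ) (ptraceB M) (w i)⟫_ℂ‖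
      ≤ ∑ y : ι × nB, ‖⟪tensorVec (u y.1) (EuclideanSpace.single y.2 1),
          toEuclideanCLM (𝕜 := ℂ) M (tensorVec (w y.1) (EuclideanSpace.single y.2 1))⟫_ℂ‖ := by
  rw [Fintype.sum_prod_type]
  gcongr with i
  rw [inner_ptraceB]
  exact norm_sum_le _ _

theorem sum_norm_inner_ptraceB_commutator_le {ρ : Matrix (nS × nB) (nS × nB) ℂ}
    (hρ : ρ.PosSemidef) (X : Matrix (nS × nB) (nS × nB) ℂ) [Fintype ι]
    {u w : ι → EuclideanSpace ℂ nS} (hu : Orthonormal ℂ u) (hw : Orthonormal ℂ w) :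
    ∑ i, ‖⟪u i, toEuclideanCLM (𝕜 := ℂ) (ptraceB (ρ * X - X * ρ)) (w i)⟫_ℂ‖
      ≤ 2 * ρ.trace.re * opNorm X := by
  have h := sum_norm_inner_commutator_le hρ X
    (orthonormal_tensorVec hu EuclideanSpace.orthonormal_single)
    (orthonormal_tensorVec hw EuclideanSpace.orthonormal_single)
  exact (sum_norm_inner_ptraceB_le _ u w).trans h

end PartialTrace

section Pairs

variable {κ : Type*}

def pairEnd (P : Finset (κ × κ)) (x : P × Bool) : κ := bif x.2 then x.1.1.1 else x.1.1.2

theorem injective_pairEnd {P : Finset (κ × κ)} (hne : ∀ p ∈ P, p.1 ≠ p.2)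
    (hdisj : ∀ p ∈ P, ∀ q ∈ P, p ≠ q → p.1 ≠ q.1 ∧ p.1 ≠ q.2 ∧ p.2 ≠ q.1 ∧ p.2 ≠ q.2) :
    Function.Injective (pairEnd P) := by
  rintro ⟨⟨p, hp⟩, a⟩ ⟨⟨q, hq⟩, b⟩ h
  by_cases hpq : p = q
  · subst hpq
    have := hne p hp
    cases a <;> cases b <;> simp_all [pairEnd, eq_comm]
  · have := hdisj p hp q hq hpq
    cases a <;> cases b <;> simp_all [pairEnd]

variable {n : Type*} [Fintype n] [DecidableEq n]

theorem two_mul_sum_norm_inner_pairs_le {B : Matrix n n ℂ} (hB : B.IsHermitian)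
    {v : κ → EuclideanSpace ℂ n} (hv : Orthonormal ℂ v) {P : Finset (κ × κ)}
    (hne : ∀ p ∈ P, p.1 ≠ p.2)
    (hdisj : ∀ p ∈ P, ∀ q ∈ P, p ≠ q → p.1 ≠ q.1 ∧ p.1 ≠ q.2 ∧ p.2 ≠ q.1 ∧ p.2 ≠ q.2) {M : ℝ}
    (hM : ∀ u w : P × Bool → EuclideanSpace ℂ n, Orthonormal ℂ u → Orthonormal ℂ w →
      ∑ x, ‖⟪u x, toEuclideanCLM (𝕜 := ℂ) B (w x)⟫_ℂ‖ ≤ M) :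
    2 * ∑ p ∈ P, ‖⟪v p.1, toEuclideanCLM (𝕜 := ℂ) B (v p.2)⟫_ℂ‖ ≤ M := by
  have hf := injective_pairEnd hne hdisj
  have hg : Function.Injective (pairEnd P ∘ Prod.map id not) :=
    hf.comp (Equiv.prodCongr (Equiv.refl P) Equiv.boolNot).injective
  refine le_of_eq_of_le ?_ (hM _ _ (hv.comp _ hf) (hv.comp _ hg))
  rw [Fintype.sum_prod_type, ← Finset.sum_coe_sort P, Finset.mul_sum]
  refine Finset.sum_congr rfl fun p _ => ?_
  simp only [Fintype.univ_bool, Finset.mem_singleton, Bool.true_eq_false, not_false_eq_true,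
    Finset.sum_insert, Finset.sum_singleton, Function.comp_apply, Prod.map_apply, id_eq, pairEnd,
    cond_true, cond_false, Bool.not_true, Bool.not_false,
    hB.norm_inner_toEuclideanCLM_comm (v p.1.2)]
  ring

end Pairs

theorem slow_states_decohere_general
    (dS dB : ℕ)
    (HS : Matrix (Fin dS) (Fin dS) ℂ) (hHS : HS.IsHermitian)
    (HSB : Matrix (Fin dS × Fin dB) (Fin dS × Fin dB) ℂ) (hHSB : HSB.IsHermitian)
    (ES : Fin dS → ℝ) (vS : Fin dS → EuclideanSpace ℂ (Fin dS))
    (hvS : Orthonormal ℂ vS)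
    (heig : ∀ k, Matrix.toEuclideanCLM (𝕜 := ℂ) HS (vS k) = (ES k : ℂ) • vS k)
    (ρ : Matrix (Fin dS × Fin dB) (Fin dS × Fin dB) ℂ) (hρ : IsDensityMatrix ρ) :
    (∀ P : Finset (Fin dS × Fin dS),
      (∀ p ∈ P, p.1 ≠ p.2) →
      (∀ p ∈ P, ∀ q ∈ P, p ≠ q → p.1 ≠ q.1 ∧ p.1 ≠ q.2 ∧ p.2 ≠ q.1 ∧ p.2 ≠ q.2) →
      ∑ p ∈ P, |ES p.1 - ES p.2|
          * ‖⟪vS p.1, Matrix.toEuclideanCLM (𝕜 := ℂ) (ptraceB ρ) (vS p.2)⟫_ℂ‖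
        ≤ opNorm HSB + traceNorm
            (Complex.I • (ptraceB ρ * HS - HS * ptraceB ρ)
              + Complex.I • ptraceB (ρ * HSB - HSB * ρ)) / 2) ∧
    ∀ k l : Fin dS,
      |ES k - ES l| * ‖⟪vS k, Matrix.toEuclideanCLM (𝕜 := ℂ) (ptraceB ρ) (vS l)⟫_ℂ‖
        ≤ opNorm HSB + traceNorm
            (Complex.I • (ptraceB ρ * HS - HS * ptraceB ρ)
              + Complex.I • ptraceB (ρ * HSB - HSB * ρ)) / 2 := by
  set ρS := ptraceB ρ
  set A₂ := Complex.I • ptraceB (ρ * HSB - HSB * ρ)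
  set A := Complex.I • (ρS * HS - HS * ρS) + A₂
  have hA₂ : A₂.IsHermitian := by
    simpa only [A₂, ptraceB_smul] using
      isHermitian_ptraceB (isHermitian_I_smul_commutator hρ.1.1 hHSB)
  have hA : A.IsHermitian :=
    (isHermitian_I_smul_commutator (isHermitian_ptraceB hρ.1.1) hHS).add hA₂
  have hpairs : ∀ P : Finset (Fin dS × Fin dS), (∀ p ∈ P, p.1 ≠ p.2) →
      (∀ p ∈ P, ∀ q ∈ P, p ≠ q → p.1 ≠ q.1 ∧ p.1 ≠ q.2 ∧ p.2 ≠ q.1 ∧ p.2 ≠ q.2) →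
      ∑ p ∈ P, |ES p.1 - ES p.2| * ‖⟪vS p.1, toEuclideanCLM (𝕜 := ℂ) ρS (vS p.2)⟫_ℂ‖
        ≤ opNorm HSB + traceNorm A / 2 := fun P hne hdisj => by
    have h₁ := two_mul_sum_norm_inner_pairs_le hA hvS hne hdisj fun u w hu hw =>
      sum_norm_inner_le_traceNorm hA hu hw
    have h₂ := two_mul_sum_norm_inner_pairs_le hA₂ hvS hne hdisj (M := 2 * opNorm HSB)
      fun u w hu hw => by
        simpa [A₂, hρ.2] using sum_norm_inner_ptraceB_commutator_le hρ.1 HSB hu hw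
    have hentries := Finset.sum_le_sum fun p (_ : p ∈ P) =>
      abs_sub_mul_norm_inner_le hHS ρS A₂ (heig p.1) (heig p.2)
    rw [Finset.sum_add_distrib] at hentries
    linarith
  refine ⟨hpairs, fun k l => ?_⟩
  rcases eq_or_ne k l with rfl | hkl
  · simpa using hpairs ∅ (by simp) (by simp)
  · simpa using hpairs {(k, l)} (by simpa using hkl) (by simp)

/-- slow states must decohere in the eigenbasis of `H_S`:
`‖H_{SB}‖∞ + ½‖dρ^S/dt‖₁ ≥ Σ_{(k,l)∈P} |E^S_k − E^S_l||ρ^S_{kl}|` for every collection of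
pairwise-disjoint index pairs, and in particular `≥ |E^S_k − E^S_l||ρ^S_{kl}|` for all `k, l`. -/
theorem slow_states_decohere
    (dS dB : ℕ)
    (HS : Matrix (Fin dS) (Fin dS) ℂ) (hHS : HS.IsHermitian) (hHStr : HS.trace = 0)
    (HB : Matrix (Fin dB) (Fin dB) ℂ) (hHB : HB.IsHermitian) (hHBtr : HB.trace = 0)
    (HSB : Matrix (Fin dS × Fin dB) (Fin dS × Fin dB) ℂ) (hHSB : HSB.IsHermitian)
    (hHSBtr : HSB.trace = 0)
    (c : ℝ)
    (H : Matrix (Fin dS × Fin dB) (Fin dS × Fin dB) ℂ)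
    (hHdef : H = (c : ℂ) • 1 + HS ⊗ₖ (1 : Matrix (Fin dB) (Fin dB) ℂ)
        + (1 : Matrix (Fin dS) (Fin dS) ℂ) ⊗ₖ HB + HSB)
    (hH : H.IsHermitian)
    (ES : Fin dS → ℝ) (vS : Fin dS → EuclideanSpace ℂ (Fin dS))
    (hvS : Orthonormal ℂ vS)
    (heig : ∀ k, Matrix.toEuclideanCLM (𝕜 := ℂ) HS (vS k) = (ES k : ℂ) • vS k)
    (ρ : Matrix (Fin dS × Fin dB) (Fin dS × Fin dB) ℂ) (hρ : IsDensityMatrix ρ) :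
    (∀ P : Finset (Fin dS × Fin dS),
      (∀ p ∈ P, p.1 ≠ p.2) →
      (∀ p ∈ P, ∀ q ∈ P, p ≠ q → p.1 ≠ q.1 ∧ p.1 ≠ q.2 ∧ p.2 ≠ q.1 ∧ p.2 ≠ q.2) →
      ∑ p ∈ P, |ES p.1 - ES p.2|
          * ‖⟪vS p.1, Matrix.toEuclideanCLM (𝕜 := ℂ) (ptraceB ρ) (vS p.2)⟫_ℂ‖
        ≤ opNorm HSB + traceNorm
            (Complex.I • (ptraceB ρ * HS - HS * ptraceB ρ)
              + Complex.I • ptraceB (ρ * HSB - HSB * ρ)) / 2) ∧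
    ∀ k l : Fin dS,
      |ES k - ES l| * ‖⟪vS k, Matrix.toEuclideanCLM (𝕜 := ℂ) (ptraceB ρ) (vS l)⟫_ℂ‖
        ≤ opNorm HSB + traceNorm
            (Complex.I • (ptraceB ρ * HS - HS * ptraceB ρ)
              + Complex.I • ptraceB (ρ * HSB - HSB * ρ)) / 2 :=
  slow_states_decohere_general dS dB HS hHS HSB hHSB ES vS hvS heig ρ hρ

end PQSM
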